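/- Let (Ω, 𝓕, P) be a probability space and T a positive natural number. Let η₁, …, η_T : Ω → ℕ be i.i.d. integrable random variables each distributed as η, and set R_T = Σ_{t=1}^T η_t. Let m̄ : Ω → ℕ be an integrable random variable with m̄ ≤ R_T almost surely. Let (A_a)_{a∈ℕ} and (B_b)_{b∈ℕ} be two sequences of i.i.d. nonnegative integrable real random variables, each sequence independent of the pair (m̄, R_T), with E[A₁] ≤ D_max and E[B₁] ≤ D_max for a constant D_max ≥ 0. Then E[ Σ_{a=1}^{m̄} A_a + Σ_{b=m̄+1}^{R_T} B_b ] ≤ T · E[η] · D_max. Consequently, for any real m with m ≥ E[η] · D_max, this expectation is at most m · T. -/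

import Mathlib

open MeasureTheory ProbabilityTheory Finset

open scoped ENNReal

/-!
Write `N = (m̄, R_T)`. Both sums run over random index sets `s (N ω)`, and since `N` is
independent of each summand,
`E[∑_{i ∈ s N} A_i] = ∑_i P(i ∈ s N) E[A_i] ≤ E[#(s N)] · D_max`
(a Wald-type identity: write the finite sum as a series of indicator products in `ℝ≥0∞`).
The index sets `[1, m̄]` and `[m̄ + 1, R_T]` have sizes adding up to `R_T`, and
`E[R_T] = T · E[η]` because the `η_t` are identically distributed.
-/

section RandomFinset

variable {Ω β ι : Type*} [MeasurableSpace Ω] [MeasurableSpace β] [Countable β]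
  [MeasurableSingletonClass β] {P : Measure Ω} {X : Ω → β}

theorem measurable_sum_comp_finset {M : Type*} [AddCommMonoid M] [MeasurableSpace M]
    [MeasurableAdd₂ M] (hX : Measurable X) (s : β → Finset ι) {A : ι → Ω → M}
    (hA : ∀ i, Measurable (A i)) :
    Measurable fun ω => ∑ i ∈ s (X ω), A i ω :=
  (measurable_from_prod_countable_left (f := fun p : Ω × β => ∑ i ∈ s p.2, A i p.1)
    fun b => Finset.measurable_sum (s b) fun i _ => hA i).comp (measurable_id.prodMk hX)

theorem lintegral_sum_comp_finset_le [Countable ι] (hX : Measurable X) (s : β → Finset ι)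
    {A : ι → Ω → ℝ≥0∞} (hA : ∀ i, Measurable (A i)) (hindep : ∀ i, IndepFun X (A i) P)
    {D : ℝ≥0∞} (hD : ∀ i, ∫⁻ ω, A i ω ∂P ≤ D) :
    ∫⁻ ω, ∑ i ∈ s (X ω), A i ω ∂P ≤ (∫⁻ ω, (#(s (X ω)) : ℝ≥0∞) ∂P) * D := by
  classical
  let mem (i : ι) (b : β) : ℝ≥0∞ := if i ∈ s b then 1 else 0
  have hmem : ∀ i, Measurable fun ω => mem i (X ω) := fun i =>
    (measurable_of_countable (mem i)).comp hX
  have hsum : ∀ (t : Finset ι) (f : ι → ℝ≥0∞),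
      ∑ i ∈ t, f i = ∑' i, (if i ∈ t then 1 else 0) * f i := by
    intro t f
    rw [sum_eq_tsum_indicator]
    congr 1 with i
    by_cases hi : i ∈ t <;> simp [hi]
  calc ∫⁻ ω, ∑ i ∈ s (X ω), A i ω ∂P
      = ∑' i, ∫⁻ ω, mem i (X ω) * A i ω ∂P := by
        simp_rw [hsum]
        exact lintegral_tsum fun i => ((hmem i).mul (hA i)).aemeasurable
    _ = ∑' i, (∫⁻ ω, mem i (X ω) ∂P) * ∫⁻ ω, A i ω ∂P := by
        congr 1 with i
        exact lintegral_mul_eq_lintegral_mul_lintegral_of_indepFun'' (hmem i).aemeasurable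
          (hA i).aemeasurable ((hindep i).comp (φ := mem i) (measurable_of_countable _)
            measurable_id)
    _ ≤ ∑' i, (∫⁻ ω, mem i (X ω) ∂P) * D :=
        ENNReal.tsum_le_tsum fun i => by gcongr; exact hD i
    _ = (∫⁻ ω, (#(s (X ω)) : ℝ≥0∞) ∂P) * D := by
        rw [ENNReal.tsum_mul_right, ← lintegral_tsum fun i => (hmem i).aemeasurable]
        congr 2 with ω
        simpa [mem] using (hsum (s (X ω)) 1).symm

theorem lintegral_ofReal_sum_comp_finset_le [Countable ι] (hX : Measurable X)
    (s : β → Finset ι) {A : ι → Ω → ℝ} (hA : ∀ i, Measurable (A i))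
    (hint : ∀ i, Integrable (A i) P) (hnonneg : ∀ i ω, 0 ≤ A i ω)
    (hindep : IndepFun X (fun ω i => A i ω) P) {i₀ : ι}
    (hident : ∀ i, IdentDistrib (A i) (A i₀) P P) {D : ℝ} (hD : ∫ ω, A i₀ ω ∂P ≤ D) :
    ∫⁻ ω, ENNReal.ofReal (∑ i ∈ s (X ω), A i ω) ∂P
      ≤ (∫⁻ ω, (#(s (X ω)) : ℝ≥0∞) ∂P) * ENNReal.ofReal D := by
  simp_rw [ENNReal.ofReal_sum_of_nonneg fun i _ => hnonneg i _]
  refine lintegral_sum_comp_finset_le hX s (fun i => (hA i).ennreal_ofReal)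
    (fun i => hindep.comp measurable_id
      (ENNReal.measurable_ofReal.comp (measurable_pi_apply i))) fun i => ?_
  rw [← ofReal_integral_eq_lintegral_ofReal (hint i) (ae_of_all _ (hnonneg i)),
    (hident i).integral_eq]
  exact ENNReal.ofReal_le_ofReal hD

end RandomFinset

section Counting

variable {Ω ι : Type*} [MeasurableSpace Ω] {P : Measure Ω}

theorem lintegral_natCast_sum_of_identDistrib [Fintype ι] {η : ι → Ω → ℕ}
    (hη : ∀ i, Measurable (η i)) {i₀ : ι} (hint : Integrable (fun ω => (η i₀ ω : ℝ)) P)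
    (hident : ∀ i, IdentDistrib (η i) (η i₀) P P) :
    ∫⁻ ω, ((∑ i, η i ω : ℕ) : ℝ≥0∞) ∂P
      = Fintype.card ι * ENNReal.ofReal (∫ ω, (η i₀ ω : ℝ) ∂P) := by
  have hcast : Measurable (Nat.cast : ℕ → ℝ≥0∞) := measurable_of_countable _
  rw [ofReal_integral_eq_lintegral_ofReal hint (ae_of_all _ fun ω => Nat.cast_nonneg _)]
  push_cast
  rw [lintegral_finsetSum (f := fun i ω => (η i ω : ℝ≥0∞)) _ fun i _ => hcast.comp (hη i)]
  have hsame : ∀ i, ∫⁻ ω, (η i ω : ℝ≥0∞) ∂P = ∫⁻ ω, (η i₀ ω : ℝ≥0∞) ∂P := fun i =>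
    ((hident i).comp hcast).lintegral_eq
  simp [hsame]

theorem lintegral_natCast_add_sub {N M : Ω → ℕ} (hN : Measurable N) (hNM : ∀ᵐ ω ∂P, N ω ≤ M ω) :
    ∫⁻ ω, (N ω : ℝ≥0∞) ∂P + ∫⁻ ω, ((M ω - N ω : ℕ) : ℝ≥0∞) ∂P = ∫⁻ ω, (M ω : ℝ≥0∞) ∂P := by
  rw [← lintegral_add_left (f := fun ω => (N ω : ℝ≥0∞))
    ((measurable_of_countable (Nat.cast : ℕ → ℝ≥0∞)).comp hN)]
  refine lintegral_congr_ae (hNM.mono fun ω h => ?_)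
  dsimp only
  rw [← Nat.cast_add, Nat.add_sub_cancel' h]

end Counting

theorem integral_le_of_lintegral_ofReal_le {Ω : Type*} [MeasurableSpace Ω] {P : Measure Ω}
    {f : Ω → ℝ} (hf : 0 ≤ᵐ[P] f) (hfm : AEStronglyMeasurable f P) {c : ℝ} (hc : 0 ≤ c)
    (h : ∫⁻ ω, ENNReal.ofReal (f ω) ∂P ≤ ENNReal.ofReal c) : ∫ ω, f ω ∂P ≤ c := by
  rw [integral_eq_lintegral_of_nonneg_ae hf hfm]
  exact ENNReal.toReal_le_of_le_ofReal hc h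

theorem stmt_0_general {Ω : Type*} [MeasurableSpace Ω] (P : Measure Ω) [IsProbabilityMeasure P]
    (T : ℕ) (hT : 0 < T)
    (η : Fin T → Ω → ℕ)
    (hη_meas : ∀ t, Measurable (η t))
    (hη_int : ∀ t, Integrable (fun ω => (η t ω : ℝ)) P)
    (hη_ident : ∀ s t, IdentDistrib (η s) (η t) P P)
    (R : Ω → ℕ) (hR : ∀ ω, R ω = ∑ t, η t ω)
    (mbar : Ω → ℕ) (hmbar_meas : Measurable mbar)
    (hmbar_le : ∀ᵐ ω ∂P, mbar ω ≤ R ω)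
    (A B : ℕ → Ω → ℝ)
    (hA_meas : ∀ a, Measurable (A a)) (hB_meas : ∀ b, Measurable (B b))
    (hA_int : ∀ a, Integrable (A a) P) (hB_int : ∀ b, Integrable (B b) P)
    (hA_nonneg : ∀ a ω, 0 ≤ A a ω) (hB_nonneg : ∀ b ω, 0 ≤ B b ω)
    (hA_ident : ∀ a a', IdentDistrib (A a) (A a') P P)
    (hB_ident : ∀ b b', IdentDistrib (B b) (B b') P P)
    (hA_indep_pair : IndepFun (fun ω => (mbar ω, R ω)) (fun ω a => A a ω) P)
    (hB_indep_pair : IndepFun (fun ω => (mbar ω, R ω)) (fun ω b => B b ω) P)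
    (Dmax : ℝ) (hDmax : 0 ≤ Dmax)
    (hA_mean : ∫ ω, A 1 ω ∂P ≤ Dmax)
    (hB_mean : ∫ ω, B 1 ω ∂P ≤ Dmax) :
    (∫ ω, ((∑ a ∈ Icc 1 (mbar ω), A a ω) + ∑ b ∈ Icc (mbar ω + 1) (R ω), B b ω) ∂P
        ≤ T * (∫ ω, (η ⟨0, hT⟩ ω : ℝ) ∂P) * Dmax)
    ∧ ∀ m : ℝ, (∫ ω, (η ⟨0, hT⟩ ω : ℝ) ∂P) * Dmax ≤ m →
        ∫ ω, ((∑ a ∈ Icc 1 (mbar ω), A a ω) + ∑ b ∈ Icc (mbar ω + 1) (R ω), B b ω) ∂P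
          ≤ m * T := by
  set Eη := ∫ ω, (η ⟨0, hT⟩ ω : ℝ) ∂P
  have hR_meas : Measurable R := funext hR ▸ Finset.measurable_sum _ fun t _ => hη_meas t
  have hN_meas : Measurable fun ω => (mbar ω, R ω) := hmbar_meas.prodMk hR_meas
  have hcount : ∫⁻ ω, (#(Icc 1 (mbar ω)) : ℝ≥0∞) ∂P
      + ∫⁻ ω, (#(Icc (mbar ω + 1) (R ω)) : ℝ≥0∞) ∂P = T * ENNReal.ofReal Eη := by
    simp only [Nat.card_Icc, Nat.add_sub_cancel, Nat.add_sub_add_right]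
    rw [lintegral_natCast_add_sub hmbar_meas hmbar_le, funext hR,
      lintegral_natCast_sum_of_identDistrib hη_meas (hη_int _) (hη_ident · _), Fintype.card_fin]
  have hA_sum := lintegral_ofReal_sum_comp_finset_le hN_meas (fun n => Icc 1 n.1) hA_meas
    hA_int hA_nonneg hA_indep_pair (hA_ident · 1) hA_mean
  have hB_sum := lintegral_ofReal_sum_comp_finset_le hN_meas (fun n => Icc (n.1 + 1) n.2) hB_meas
    hB_int hB_nonneg hB_indep_pair (hB_ident · 1) hB_mean
  have hA_sum_meas := measurable_sum_comp_finset hN_meas (fun n => Icc 1 n.1) hA_meas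
  have hB_sum_meas := measurable_sum_comp_finset hN_meas (fun n => Icc (n.1 + 1) n.2) hB_meas
  have hsum_nonneg (ω : Ω) :
      0 ≤ (∑ a ∈ Icc 1 (mbar ω), A a ω) + ∑ b ∈ Icc (mbar ω + 1) (R ω), B b ω :=
    add_nonneg (sum_nonneg fun a _ => hA_nonneg a ω) (sum_nonneg fun b _ => hB_nonneg b ω)
  have hEη : 0 ≤ Eη := integral_nonneg fun ω => Nat.cast_nonneg _
  have hbound : ∫ ω, ((∑ a ∈ Icc 1 (mbar ω), A a ω) + ∑ b ∈ Icc (mbar ω + 1) (R ω), B b ω) ∂P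
      ≤ T * Eη * Dmax := by
    refine integral_le_of_lintegral_ofReal_le (ae_of_all _ hsum_nonneg)
      (hA_sum_meas.add hB_sum_meas).aestronglyMeasurable (by positivity) ?_
    calc _ ≤ ∫⁻ ω, ENNReal.ofReal (∑ a ∈ Icc 1 (mbar ω), A a ω)
            + ENNReal.ofReal (∑ b ∈ Icc (mbar ω + 1) (R ω), B b ω) ∂P :=
          lintegral_mono fun ω => ENNReal.ofReal_add_le
      _ = _ := lintegral_add_left hA_sum_meas.ennreal_ofReal _
      _ ≤ _ := add_le_add hA_sum hB_sum
      _ = ENNReal.ofReal (T * Eη * Dmax) := by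
          rw [← add_mul, hcount, ENNReal.ofReal_mul (by positivity),
            ENNReal.ofReal_mul (by positivity), ENNReal.ofReal_natCast]
  refine ⟨hbound, fun m hm => hbound.trans ?_⟩
  rw [mul_assoc, mul_comm]
  exact mul_le_mul_of_nonneg_right hm T.cast_nonneg

/-- Lemma 1 (stability of the random instantaneous assignment policy), probabilistic content:
with `η₁, …, η_T` i.i.d. request counts, `R_T = ∑ₜ η_t`, effective fleet size `m̄ ≤ R_T`,
and i.i.d. service distances `(A_a)` and `(B_b)` independent of `(m̄, R_T)` with means bounded
by `D_max`, the expected total service distance `E[∑_{a=1}^{m̄} A_a + ∑_{b=m̄+1}^{R_T} B_b]`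
is at most `T · E[η] · D_max`; hence at most `m · T` whenever `m ≥ E[η] · D_max`. -/
theorem stmt_0 {Ω : Type*} [MeasurableSpace Ω] (P : Measure Ω) [IsProbabilityMeasure P]
    (T : ℕ) (hT : 0 < T)
    (η : Fin T → Ω → ℕ)
    (hη_meas : ∀ t, Measurable (η t))
    (hη_int : ∀ t, Integrable (fun ω => (η t ω : ℝ)) P)
    (hη_indep : iIndepFun η P)
    (hη_ident : ∀ s t, IdentDistrib (η s) (η t) P P)
    (R : Ω → ℕ) (hR : ∀ ω, R ω = ∑ t, η t ω)
    (mbar : Ω → ℕ) (hmbar_meas : Measurable mbar)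
    (hmbar_int : Integrable (fun ω => (mbar ω : ℝ)) P)
    (hmbar_le : ∀ᵐ ω ∂P, mbar ω ≤ R ω)
    (A B : ℕ → Ω → ℝ)
    (hA_meas : ∀ a, Measurable (A a)) (hB_meas : ∀ b, Measurable (B b))
    (hA_int : ∀ a, Integrable (A a) P) (hB_int : ∀ b, Integrable (B b) P)
    (hA_nonneg : ∀ a ω, 0 ≤ A a ω) (hB_nonneg : ∀ b ω, 0 ≤ B b ω)
    (hA_indep : iIndepFun A P)
    (hB_indep : iIndepFun B P)
    (hA_ident : ∀ a a', IdentDistrib (A a) (A a') P P)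
    (hB_ident : ∀ b b', IdentDistrib (B b) (B b') P P)
    (hA_indep_pair : IndepFun (fun ω => (mbar ω, R ω)) (fun ω a => A a ω) P)
    (hB_indep_pair : IndepFun (fun ω => (mbar ω, R ω)) (fun ω b => B b ω) P)
    (Dmax : ℝ) (hDmax : 0 ≤ Dmax)
    (hA_mean : ∫ ω, A 1 ω ∂P ≤ Dmax)
    (hB_mean : ∫ ω, B 1 ω ∂P ≤ Dmax) :
    (∫ ω, ((∑ a ∈ Icc 1 (mbar ω), A a ω) + ∑ b ∈ Icc (mbar ω + 1) (R ω), B b ω) ∂P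
        ≤ T * (∫ ω, (η ⟨0, hT⟩ ω : ℝ) ∂P) * Dmax)
    ∧ ∀ m : ℝ, (∫ ω, (η ⟨0, hT⟩ ω : ℝ) ∂P) * Dmax ≤ m →
        ∫ ω, ((∑ a ∈ Icc 1 (mbar ω), A a ω) + ∑ b ∈ Icc (mbar ω + 1) (R ω), B b ω) ∂P
          ≤ m * T :=
  stmt_0_general P T hT η hη_meas hη_int hη_ident R hR mbar hmbar_meas hmbar_le A B hA_meas hB_meas
    hA_int hB_int hA_nonneg hB_nonneg hA_ident hB_ident hA_indep_pair hB_indep_pair Dmax hDmax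
    hA_mean hB_mean
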